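/- Let f : ℝ → ℝ be a function of bounded variation on [0,1] with total variation V = V(f; [0,1]) finite, and suppose f is Lebesgue integrable on [0,1]. For each n ≥ 1, consider the uniform partition of [0,1] into n equal subintervals [(i−1)/n, i/n], i = 1, ..., n. Then 0 ≤ Σ_{i=1}^n (sup_{x ∈ [(i−1)/n, i/n]} f(x)) · (1/n) − ∫_0^1 f(x) dx ≤ V/n. In particular, the simple fuzzy measure over the uniform partition converges to the fuzzy measure at rate O(1/n) for membership functions of bounded variation. -/

import Mathlib

/-!
On each cell `[a, b]` of a partition, `f` lies between `S - V` and `S`, where `S` is its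
supremum and `V` its variation on the cell. Integrating, the cell contributes between `0` and
`V (b - a)` to the gap between the upper Darboux sum and the integral. Summing over the cells, and
using that variation is additive over adjacent intervals, the gap is at most the mesh of the
partition times the total variation.
-/

open MeasureTheory Set Finset

namespace BoundedVariationOn

variable {α : Type*} [LinearOrder α] {f : α → ℝ} {s : Set α}

lemma bddAbove_image (hf : BoundedVariationOn f s) : BddAbove (f '' s) := by
  rcases s.eq_empty_or_nonempty with rfl | ⟨x₀, hx₀⟩
  · simp
  refine ⟨f x₀ + (eVariationOn f s).toReal, ?_⟩
  rintro _ ⟨x, hx, rfl⟩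
  linarith [hf.sub_le hx hx₀]

lemma sSup_image_le_add (hf : BoundedVariationOn f s) {x : α} (hx : x ∈ s) :
    sSup (f '' s) ≤ f x + (eVariationOn f s).toReal := by
  refine csSup_le ⟨f x, mem_image_of_mem f hx⟩ ?_
  rintro _ ⟨y, hy, rfl⟩
  linarith [hf.sub_le hy hx]

end BoundedVariationOn

section Darboux

variable {f : ℝ → ℝ} {a b : ℝ}

lemma integral_le_sSup_image_mul (hab : a ≤ b) (hf : BoundedVariationOn f (Icc a b))
    (hint : IntervalIntegrable f volume a b) :
    ∫ x in a..b, f x ≤ sSup (f '' Icc a b) * (b - a) := by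
  have := intervalIntegral.integral_mono_on hab hint intervalIntegrable_const
    fun x hx ↦ le_csSup hf.bddAbove_image (mem_image_of_mem f hx)
  rwa [intervalIntegral.integral_const, smul_eq_mul, mul_comm] at this

lemma sSup_image_mul_sub_integral_le (hab : a ≤ b) (hf : BoundedVariationOn f (Icc a b))
    (hint : IntervalIntegrable f volume a b) :
    sSup (f '' Icc a b) * (b - a) - ∫ x in a..b, f x ≤
      (eVariationOn f (Icc a b)).toReal * (b - a) := by
  have := intervalIntegral.integral_mono_on hab intervalIntegrable_const hint
    fun x hx ↦ sub_le_iff_le_add.mpr (hf.sSup_image_le_add hx)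
  rw [intervalIntegral.integral_const, smul_eq_mul] at this
  linarith

noncomputable def upperDarbouxSum (f : ℝ → ℝ) (p : ℕ → ℝ) (n : ℕ) : ℝ :=
  ∑ i ∈ range n, sSup (f '' Icc (p i) (p (i + 1))) * (p (i + 1) - p i)

variable {p : ℕ → ℝ} {n : ℕ}

lemma Monotone.Icc_succ_subset_Icc (hp : Monotone p) {i : ℕ} (hi : i < n) :
    Icc (p i) (p (i + 1)) ⊆ Icc (p 0) (p n) :=
  Icc_subset_Icc (hp (Nat.zero_le i)) (hp hi)

lemma IntervalIntegrable.of_monotone_cell (hint : IntervalIntegrable f volume (p 0) (p n))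
    (hp : Monotone p) {i : ℕ} (hi : i < n) :
    IntervalIntegrable f volume (p i) (p (i + 1)) := by
  refine hint.mono_set ?_
  rw [uIcc_of_le (hp (Nat.le_succ i)), uIcc_of_le (hp (Nat.zero_le n))]
  exact hp.Icc_succ_subset_Icc hi

lemma integral_le_upperDarbouxSum (hp : Monotone p) (hf : BoundedVariationOn f (Icc (p 0) (p n)))
    (hint : IntervalIntegrable f volume (p 0) (p n)) :
    ∫ x in p 0..p n, f x ≤ upperDarbouxSum f p n := by
  rw [← intervalIntegral.sum_integral_adjacent_intervals (a := p) (n := n)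
    fun i hi ↦ hint.of_monotone_cell hp hi]
  refine sum_le_sum fun i hi ↦ ?_
  have hi : i < n := mem_range.mp hi
  exact integral_le_sSup_image_mul (hp (Nat.le_succ i))
    (hf.mono (hp.Icc_succ_subset_Icc hi)) (hint.of_monotone_cell hp hi)

lemma upperDarbouxSum_sub_integral_le (hp : Monotone p)
    (hf : BoundedVariationOn f (Icc (p 0) (p n))) (hint : IntervalIntegrable f volume (p 0) (p n))
    {h : ℝ} (hmesh : ∀ i < n, p (i + 1) - p i ≤ h) :
    upperDarbouxSum f p n - ∫ x in p 0..p n, f x ≤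
      h * (eVariationOn f (Icc (p 0) (p n))).toReal := by
  set V : ℕ → ℝ := fun i ↦ (eVariationOn f (Icc (p i) (p (i + 1)))).toReal
  have hcell : ∀ i ∈ range n, BoundedVariationOn f (Icc (p i) (p (i + 1))) := fun i hi ↦
    hf.mono (hp.Icc_succ_subset_Icc (mem_range.mp hi))
  have hV : ∑ i ∈ range n, V i = (eVariationOn f (Icc (p 0) (p n))).toReal := by
    rw [← ENNReal.toReal_sum hcell, eVariationOn.sum' f hp]
  rw [upperDarbouxSum, ← intervalIntegral.sum_integral_adjacent_intervals (a := p) (n := n)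
    fun i hi ↦ hint.of_monotone_cell hp hi, ← sum_sub_distrib, ← hV, mul_sum]
  refine sum_le_sum fun i hi ↦ ?_
  have hi' : i < n := mem_range.mp hi
  calc _ ≤ V i * (p (i + 1) - p i) :=
        sSup_image_mul_sub_integral_le (hp (Nat.le_succ i)) (hcell i hi)
          (hint.of_monotone_cell hp hi')
    _ ≤ h * V i := by
        rw [mul_comm]
        exact mul_le_mul_of_nonneg_right (hmesh i hi') ENNReal.toReal_nonneg

end Darboux

/-- For `f : ℝ → ℝ` of bounded variation on `[0,1]` (with total variation
`V = V(f; [0,1])` finite) and Lebesgue integrable on `[0,1]`, for the uniform partition of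
`[0,1]` into `n ≥ 1` equal subintervals, the upper Darboux sum (simple fuzzy measure)
over-estimates the integral (fuzzy measure) by at most `V / n`. -/
theorem bounded_variation_upper_darboux_rate
    (f : ℝ → ℝ) (hbv : BoundedVariationOn f (Set.Icc (0 : ℝ) 1))
    (hint : IntervalIntegrable f volume 0 1)
    (n : ℕ) (hn : 1 ≤ n) :
    0 ≤ (∑ i ∈ Finset.range n,
          sSup (f '' Set.Icc ((i : ℝ) / n) (((i : ℝ) + 1) / n)) * (1 / n))
        - ∫ t in (0 : ℝ)..1, f t ∧
    (∑ i ∈ Finset.range n,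
          sSup (f '' Set.Icc ((i : ℝ) / n) (((i : ℝ) + 1) / n)) * (1 / n))
        - ∫ t in (0 : ℝ)..1, f t ≤ (eVariationOn f (Set.Icc (0 : ℝ) 1)).toReal / n := by
  have hn0 : (n : ℝ) ≠ 0 := Nat.cast_ne_zero.mpr (by omega)
  set p : ℕ → ℝ := fun i ↦ (i : ℝ) / n with hp_def
  have hp : Monotone p := fun i j hij ↦ by simp only [hp_def]; gcongr
  have hp0 : p 0 = 0 := by simp [hp_def]
  have hpn : p n = 1 := div_self hn0
  have hmesh : ∀ i < n, p (i + 1) - p i ≤ 1 / n := fun i _ ↦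
    le_of_eq (by simp only [hp_def]; push_cast; ring)
  have hsum : ∑ i ∈ range n, sSup (f '' Icc ((i : ℝ) / n) (((i : ℝ) + 1) / n)) * (1 / n) =
      upperDarbouxSum f p n := by
    refine sum_congr rfl fun i _ ↦ ?_
    simp only [hp_def]; push_cast; ring
  have hbv' : BoundedVariationOn f (Icc (p 0) (p n)) := by rwa [hp0, hpn]
  have hint' : IntervalIntegrable f volume (p 0) (p n) := by rwa [hp0, hpn]
  have hlower := integral_le_upperDarbouxSum hp hbv' hint'
  have hupper := upperDarbouxSum_sub_integral_le hp hbv' hint' hmesh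
  rw [hp0, hpn] at hlower hupper
  rw [one_div_mul_eq_div] at hupper
  exact hsum ▸ ⟨sub_nonneg.mpr hlower, hupper⟩
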